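/- Let {l_n}, {l'_n} be sequences of positive reals and {r_n}, {r'_n} sequences of nonnegative reals, and let c > 0 be a constant with |l'_n - l_n| ≤ c and |r'_n - r_n| ≤ c for every n ≥ 1. Let Γ_{nm}(h) and K be built from ({l_n},{r_n}) and Γ'_{nm}(h) and K' be built (by the same formulas) from ({l'_n},{r'_n}). If K is finite, then K' ≤ c + 2 + (1 + 2c + K) e^c e^{K/2} + (1 + 3c) e^{3c/2} K. -/
import Mathlib


/-- For a real number `x`, its positive part `x₊ = max {x, 0}`. -/
noncomputable def ppart (x : ℝ) : ℝ := max x 0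

/-- `Δ(k) = e^{-l_k} + e^{-l_{k+1}} + e^{-(1/2)(l_k + l_{k+1} - r_k)₊} + (r_k - l_k - l_{k+1})₊`. -/
noncomputable def DeltaF (l r : ℕ → ℝ) (k : ℕ) : ℝ :=
  Real.exp (-l k) + Real.exp (-l (k + 1)) +
    Real.exp (-(1/2) * ppart (l k + l (k + 1) - r k)) + ppart (r k - l k - l (k + 1))

/-- The function `Γ_{nm}(h)` associated to the sequences `{l_n}` and `{r_n}`. -/
noncomputable def GammaF (l r : ℕ → ℝ) (n m : ℕ) (h : ℝ) : ℝ :=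
  if m < n then
    (if l m ≤ h then
      ppart (r m + h - l (m + 1)) + Real.exp h * ∑ k ∈ Finset.Icc (m + 1) (n - 1), DeltaF l r k
    else
      l m - h + Real.exp h * ∑ k ∈ Finset.Icc m (n - 1), DeltaF l r k)
  else if m = n then min h (l n - h)
  else
    (if l m ≤ h then
      ppart (r (m - 1) + h - l (m - 1)) + Real.exp h * ∑ k ∈ Finset.Icc n (m - 2), DeltaF l r k
    else
      l m - h + Real.exp h * ∑ k ∈ Finset.Icc n (m - 1), DeltaF l r k)

/-- `A_n(h)`: the largest positive integer `m < n` with `l_m ≤ h`, or `1` if there is none. -/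
noncomputable def AFun (l : ℕ → ℝ) (n : ℕ) (h : ℝ) : ℕ :=
  sSup ({1} ∪ {m : ℕ | 1 ≤ m ∧ m < n ∧ l m ≤ h})

/-- `B_n(h)`: the smallest integer `m > n` with `l_m ≤ h`, or `∞` if there is none. -/
noncomputable def BFun (l : ℕ → ℝ) (n : ℕ) (h : ℝ) : ℕ∞ :=
  sInf {x : ℕ∞ | ∃ m : ℕ, x = (m : ℕ∞) ∧ n < m ∧ l m ≤ h}

/-- `inf_{m ≥ 1} Γ_{nm}(h)`. -/
noncomputable def infGammaF (l r : ℕ → ℝ) (n : ℕ) (h : ℝ) : ℝ :=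
  sInf {x : ℝ | ∃ m : ℕ, 1 ≤ m ∧ x = GammaF l r n m h}

/-- The set whose supremum is `K = sup_{n ≥ 1} sup_{h ∈ [0, l_n]} inf_{m ≥ 1} Γ_{nm}(h)`. -/
def KSetF (l r : ℕ → ℝ) : Set ℝ :=
  {x : ℝ | ∃ n : ℕ, 1 ≤ n ∧ ∃ h : ℝ, 0 ≤ h ∧ h ≤ l n ∧ x = infGammaF l r n h}
section Aux
open Real

lemma ppart_nonneg (x : ℝ) : 0 ≤ ppart x := le_max_right x 0

lemma le_ppart (x : ℝ) : x ≤ ppart x := le_max_left x 0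

lemma ppart_mono {x y : ℝ} (h : x ≤ y) : ppart x ≤ ppart y := max_le_max h le_rfl

lemma ppart_le_of_le {x b : ℝ} (h : x ≤ b) (hb : 0 ≤ b) : ppart x ≤ b :=
  max_le h hb

lemma ppart_le_add {x y d : ℝ} (h : x ≤ y + d) (hd : 0 ≤ d) : ppart x ≤ ppart y + d := by
  unfold ppart
  rcases le_total y 0 with hy | hy
  · rw [max_eq_right hy]
    exact max_le (by linarith) (by linarith)
  · rw [max_eq_left hy]
    exact max_le (by linarith) (by linarith)

lemma deltaF_nonneg (l r : ℕ → ℝ) (k : ℕ) : 0 ≤ DeltaF l r k := by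
  unfold DeltaF
  have h1 := Real.exp_pos (-l k)
  have h2 := Real.exp_pos (-l (k + 1))
  have h3 := Real.exp_pos (-(1/2) * ppart (l k + l (k + 1) - r k))
  have h4 := ppart_nonneg (r k - l k - l (k + 1))
  linarith

lemma abs_le_iff' {a b : ℝ} (h : |a - b| ≤ c) : a ≤ b + c ∧ b ≤ a + c := by
  rw [abs_le] at h; constructor <;> linarith [h.1, h.2]

end Aux
set_option maxHeartbeats 1000000
section Aux2
open Real

lemma delta_comp (l r l' r' : ℕ → ℝ) (c : ℝ) (hc : 0 ≤ c)
    (h1 : |l' k - l k| ≤ c) (h2 : |l' (k+1) - l (k+1)| ≤ c) (h3 : |r' k - r k| ≤ c) :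
    DeltaF l' r' k ≤ (1 + 3*c) * Real.exp (3*c/2) * DeltaF l r k := by
  obtain ⟨h1a, h1b⟩ := abs_le_iff' h1
  obtain ⟨h2a, h2b⟩ := abs_le_iff' h2
  obtain ⟨h3a, h3b⟩ := abs_le_iff' h3
  set A := l k; set B := l (k+1); set R := r k
  set A' := l' k; set B' := l' (k+1); set R' := r' k
  have e1 : Real.exp (-A') ≤ Real.exp c * Real.exp (-A) := by
    rw [← Real.exp_add]; exact Real.exp_le_exp.mpr (by linarith)
  have e2 : Real.exp (-B') ≤ Real.exp c * Real.exp (-B) := by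
    rw [← Real.exp_add]; exact Real.exp_le_exp.mpr (by linarith)
  set E := Real.exp (-(1/2) * ppart (A + B - R)) with hE
  set E' := Real.exp (-(1/2) * ppart (A' + B' - R')) with hE'
  have hEpos : 0 < E := Real.exp_pos _
  have e3 : E' ≤ Real.exp (3*c/2) * E := by
    rw [hE, hE', ← Real.exp_add]
    apply Real.exp_le_exp.mpr
    have : ppart (A + B - R) ≤ ppart (A' + B' - R') + 3*c :=
      ppart_le_add (by linarith [le_ppart (A' + B' - R')]) (by linarith)
    linarith
  have e4 : ppart (R' - A' - B') ≤ ppart (R - A - B) + 3*c*Real.exp (3*c/2) * E := by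
    rcases le_total (R - A - B) 0 with hy | hy
    · -- y ≤ 0, E = exp ((R-A-B)/2)
      have hEeq : E = Real.exp ((R - A - B)/2) := by
        rw [hE]; congr 1
        rw [show ppart (A + B - R) = A + B - R from max_eq_left (by linarith)]; ring
      have hce : (1:ℝ) ≤ Real.exp (3*c/2) := Real.one_le_exp (by linarith)
      rcases le_total (R' - A' - B') 0 with hz | hz
      · have : ppart (R' - A' - B') = 0 := max_eq_right hz
        rw [this]
        have := ppart_nonneg (R - A - B)
        positivity
      · have hzval : ppart (R' - A' - B') = R' - A' - B' := max_eq_left hz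
        rw [hzval]
        have hy3 : -3*c ≤ R - A - B := by linarith
        have key : R' - A' - B' ≤ 3*c * (Real.exp (3*c/2) * Real.exp ((R-A-B)/2)) := by
          have hone : (1:ℝ) ≤ Real.exp (3*c/2) * Real.exp ((R-A-B)/2) := by
            rw [← Real.exp_add]; exact Real.one_le_exp (by linarith)
          have h3c : R' - A' - B' ≤ 3*c := by linarith
          nlinarith [mul_le_mul_of_nonneg_left hone (show (0:ℝ) ≤ 3*c by linarith)]
        calc R' - A' - B' ≤ 3*c*Real.exp (3*c/2) * E := by rw [hEeq]; linarith [key]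
          _ ≤ ppart (R - A - B) + 3*c*Real.exp (3*c/2) * E := by
              linarith [ppart_nonneg (R - A - B)]
    · -- y ≥ 0: E = 1
      have hEeq : E = 1 := by
        rw [hE, show ppart (A + B - R) = 0 from max_eq_right (by linarith)]
        simp
      have hyval : ppart (R - A - B) = R - A - B := max_eq_left hy
      have : ppart (R' - A' - B') ≤ ppart (R - A - B) + 3*c := ppart_le_add (by linarith) (by linarith)
      have hce : (1:ℝ) ≤ Real.exp (3*c/2) := Real.one_le_exp (by linarith)
      rw [hEeq]; nlinarith
  -- combine
  have hcc : Real.exp c ≤ Real.exp (3*c/2) := Real.exp_le_exp.mpr (by linarith)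
  have hce : (1:ℝ) ≤ Real.exp (3*c/2) := Real.one_le_exp (by linarith)
  have hA := Real.exp_pos (-A); have hB := Real.exp_pos (-B)
  have hy := ppart_nonneg (R - A - B)
  set F := (1 + 3*c) * Real.exp (3*c/2) with hF
  have hcF : Real.exp c ≤ F := by
    apply hcc.trans; rw [hF]; nlinarith [Real.exp_pos (3*c/2)]
  have hF1 : 1 ≤ F := by rw [hF]; nlinarith
  have t1 : Real.exp (-A') ≤ F * Real.exp (-A) := e1.trans (mul_le_mul_of_nonneg_right hcF hA.le)
  have t2 : Real.exp (-B') ≤ F * Real.exp (-B) := e2.trans (mul_le_mul_of_nonneg_right hcF hB.le)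
  have t34 : E' + ppart (R' - A' - B') ≤ F * E + F * ppart (R - A - B) := by
    have hmid : Real.exp (3*c/2) * E + 3*c*Real.exp (3*c/2) * E = F * E := by rw [hF]; ring
    have hPP : ppart (R - A - B) ≤ F * ppart (R - A - B) := by nlinarith
    linarith
  show Real.exp (-A') + Real.exp (-B') + E' + ppart (R' - A' - B')
      ≤ F * (Real.exp (-A) + Real.exp (-B) + E + ppart (R - A - B))
  have : F * (Real.exp (-A) + Real.exp (-B) + E + ppart (R - A - B))
      = F * Real.exp (-A) + F * Real.exp (-B) + (F * E + F * ppart (R - A - B)) := by ring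
  linarith
end Aux2
section Aux3
open Real Finset

lemma Icc_split_bot {a b : ℕ} (h : a ≤ b) :
    Finset.Icc a b = insert a (Finset.Icc (a+1) b) := by
  ext x; simp only [Finset.mem_Icc, Finset.mem_insert]; omega

lemma sum_split_bot (f : ℕ → ℝ) {a b : ℕ} (h : a ≤ b) :
    ∑ k ∈ Finset.Icc a b, f k = f a + ∑ k ∈ Finset.Icc (a+1) b, f k := by
  rw [Icc_split_bot h, Finset.sum_insert (by simp [Finset.mem_Icc])]

lemma Icc_split_top {a b : ℕ} (h : a ≤ b) (hb : 1 ≤ b) :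
    Finset.Icc a b = insert b (Finset.Icc a (b-1)) := by
  ext x; simp only [Finset.mem_Icc, Finset.mem_insert]; omega

lemma sum_split_top (f : ℕ → ℝ) {a b : ℕ} (h : a ≤ b) (hb : 1 ≤ b) :
    ∑ k ∈ Finset.Icc a b, f k = f b + ∑ k ∈ Finset.Icc a (b-1), f k := by
  rw [Icc_split_top h hb, Finset.sum_insert (by simp [Finset.mem_Icc]; omega)]

lemma sum_delta_nonneg (l r : ℕ → ℝ) (s : Finset ℕ) : 0 ≤ ∑ k ∈ s, DeltaF l r k :=
  Finset.sum_nonneg fun k _ => deltaF_nonneg l r k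

lemma sum_delta_mono (l r : ℕ → ℝ) {a a' b b' : ℕ} (ha : a ≤ a') (hb : b' ≤ b) :
    ∑ k ∈ Finset.Icc a' b', DeltaF l r k ≤ ∑ k ∈ Finset.Icc a b, DeltaF l r k := by
  apply Finset.sum_le_sum_of_subset_of_nonneg
  · intro x hx; simp only [Finset.mem_Icc] at *; omega
  · intro k _ _; exact deltaF_nonneg l r k

lemma single_delta_le (l r : ℕ → ℝ) {a b j : ℕ} (hj : a ≤ j) (hj' : j ≤ b) :
    DeltaF l r j ≤ ∑ k ∈ Finset.Icc a b, DeltaF l r k :=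
  Finset.single_le_sum (fun k _ => deltaF_nonneg l r k) (by simp [Finset.mem_Icc]; omega)

lemma sum_delta_comp (l r l' r' : ℕ → ℝ) (c : ℝ) (hc : 0 ≤ c)
    (hcl : ∀ k : ℕ, 1 ≤ k → |l' k - l k| ≤ c) (hcr : ∀ k : ℕ, 1 ≤ k → |r' k - r k| ≤ c)
    {a b : ℕ} (ha : 1 ≤ a) :
    ∑ k ∈ Finset.Icc a b, DeltaF l' r' k
      ≤ (1 + 3*c) * Real.exp (3*c/2) * ∑ k ∈ Finset.Icc a b, DeltaF l r k := by
  rw [Finset.mul_sum]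
  apply Finset.sum_le_sum
  intro k hk
  simp only [Finset.mem_Icc] at hk
  exact delta_comp l r l' r' c hc (hcl k (by omega)) (hcl (k+1) (by omega)) (hcr k (by omega))

/-- abstract bound for `r + h - l_other` via a controlled Delta term -/
lemma ubound {c' K' A B R h : ℝ} (hc : 0 ≤ c') (hK : 0 < K') (hh : 0 ≤ h)
    (hA : A ≤ h + c')
    (h1 : Real.exp h * Real.exp (-(1/2) * ppart (A + B - R)) ≤ K')
    (h2 : Real.exp h * ppart (R - A - B) ≤ K') :
    R + h - B ≤ 3*K' + c' := by
  have hlog : Real.log K' ≤ K' - 1 := Real.log_le_sub_one_of_pos hK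
  rcases le_total 0 (A + B - R) with hx | hx
  · have hpp : ppart (A + B - R) = A + B - R := max_eq_left hx
    rw [hpp, ← Real.exp_add] at h1
    have := (Real.le_log_iff_exp_le hK).mpr h1
    linarith
  · have hpp : ppart (A + B - R) = 0 := max_eq_right hx
    rw [hpp] at h1
    simp only [mul_comm, Real.exp_zero, mul_one] at h1
    have hhl : h ≤ Real.log K' := (Real.le_log_iff_exp_le hK).mpr (by simpa using h1)
    have hz : ppart (R - A - B) = R - A - B := max_eq_left (by linarith)
    rw [hz] at h2
    have hex : (1:ℝ) ≤ Real.exp h := Real.one_le_exp hh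
    nlinarith [Real.exp_pos h]

/-- abstract bound for the `t3 + t4` terms -/
lemma t34bound {c' K' A B R h : ℝ} (hc : 0 ≤ c') (hK : 0 ≤ K') (hh : 0 ≤ h)
    (hA : h < A) (hBR : h - K' - 2*c' ≤ B - R) :
    Real.exp h * Real.exp (-(1/2) * ppart (A + B - R)) + Real.exp h * ppart (R - A - B)
      ≤ (1 + 2*c' + K') * Real.exp c' * Real.exp (K'/2) := by
  have hx : 2*h - K' - 2*c' < A + B - R := by linarith
  have hEe : Real.exp c' * Real.exp (K'/2) = Real.exp (c' + K'/2) := (Real.exp_add _ _).symm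
  rcases le_total 0 (A + B - R) with hxx | hxx
  · have hpp : ppart (A + B - R) = A + B - R := max_eq_left hxx
    have hz : ppart (R - A - B) = 0 := max_eq_right (by linarith)
    rw [hpp, hz, ← Real.exp_add, mul_zero, mul_assoc, hEe]
    have t1 : Real.exp (h + -(1/2) * (A + B - R)) ≤ Real.exp (c' + K'/2) :=
      Real.exp_le_exp.mpr (by linarith)
    nlinarith [Real.exp_pos (c' + K'/2)]
  · have hpp : ppart (A + B - R) = 0 := max_eq_right hxx
    have hz : ppart (R - A - B) = R - A - B := max_eq_left (by linarith)
    have hh2 : h < K'/2 + c' := by linarith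
    have t1 : Real.exp h ≤ Real.exp (c' + K'/2) := Real.exp_le_exp.mpr (by linarith)
    have hRb : R - A - B ≤ K' + 2*c' := by linarith
    have hR0 : 0 ≤ R - A - B := by linarith
    rw [hpp, hz, mul_assoc, hEe]
    have t2 : Real.exp h * (R - A - B) ≤ Real.exp (c' + K'/2) * (K' + 2*c') := by
      apply mul_le_mul t1 hRb hR0 (Real.exp_pos _).le
    norm_num
    nlinarith [Real.exp_pos (c' + K'/2)]

end Aux3
section Aux4
open Real

/-- the target bound as a function of `t` -/
noncomputable def Gbound (c t : ℝ) : ℝ :=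
  c + 2 + (1 + 2*c + t) * Real.exp c * Real.exp (t/2) + (1 + 3*c) * Real.exp (3*c/2) * t

lemma Gbound_facts (c t : ℝ) (hc : 0 < c) (ht : 0 < t) :
    max (max (t + c) (c + (1 + 3*c) * Real.exp (3*c/2) * t))
      (3*t + 3*c + (1 + 3*c) * Real.exp (3*c/2) * t) ≤ Gbound c t := by
  have hec : (1:ℝ) + c ≤ Real.exp c := Real.add_one_le_exp c |>.trans_eq' (by ring)
  have het : (1:ℝ) + t/2 ≤ Real.exp (t/2) := Real.add_one_le_exp (t/2) |>.trans_eq' (by ring)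
  have he3 : (1:ℝ) ≤ Real.exp (3*c/2) := Real.one_le_exp (by linarith)
  have hE3 : (0:ℝ) ≤ (1 + 3*c) * Real.exp (3*c/2) := by positivity
  have hkey : (1 + 2*c) * 1 * 1 + t * 1 * Real.exp (t/2)
      ≤ (1 + 2*c + t) * Real.exp c * Real.exp (t/2) := by
    have h1 : (1:ℝ) ≤ Real.exp c := by linarith
    have h2 : (1:ℝ) ≤ Real.exp (t/2) := by nlinarith
    have ha : (1+2*c) ≤ (1+2*c) * (Real.exp c * Real.exp (t/2)) :=
      le_mul_of_one_le_right (by linarith) (by nlinarith)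
    have hb : t * Real.exp (t/2) ≤ t * Real.exp (t/2) * Real.exp c :=
      le_mul_of_one_le_right (by positivity) h1
    have hring : (1+2*c+t)*Real.exp c*Real.exp (t/2)
        = (1+2*c)*(Real.exp c*Real.exp (t/2)) + t*Real.exp (t/2)*Real.exp c := by ring
    linarith
  have htet : 3*t - 2 ≤ t * Real.exp (t/2) := by
    nlinarith [mul_le_mul_of_nonneg_left het ht.le, sq_nonneg (t-2)]
  simp only [max_le_iff]
  refine ⟨⟨?_, ?_⟩, ?_⟩ <;> unfold Gbound <;> nlinarith

lemma Gbound_nonneg (c t : ℝ) (hc : 0 < c) (ht : 0 ≤ t) : 0 ≤ Gbound c t := by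
  unfold Gbound; positivity

-- GammaF evaluation lemmas
lemma gammaF_lt_le {l r : ℕ → ℝ} {n m : ℕ} {h : ℝ} (h1 : m < n) (h2 : l m ≤ h) :
    GammaF l r n m h
      = ppart (r m + h - l (m + 1)) + Real.exp h * ∑ k ∈ Finset.Icc (m + 1) (n - 1), DeltaF l r k := by
  rw [GammaF, if_pos h1, if_pos h2]

lemma gammaF_lt_gt {l r : ℕ → ℝ} {n m : ℕ} {h : ℝ} (h1 : m < n) (h2 : ¬ l m ≤ h) :
    GammaF l r n m h
      = l m - h + Real.exp h * ∑ k ∈ Finset.Icc m (n - 1), DeltaF l r k := by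
  rw [GammaF, if_pos h1, if_neg h2]

lemma gammaF_eq {l r : ℕ → ℝ} {n : ℕ} {h : ℝ} :
    GammaF l r n n h = min h (l n - h) := by
  rw [GammaF, if_neg (lt_irrefl n), if_pos rfl]

lemma gammaF_gt_le {l r : ℕ → ℝ} {n m : ℕ} {h : ℝ} (h1 : n < m) (h2 : l m ≤ h) :
    GammaF l r n m h
      = ppart (r (m - 1) + h - l (m - 1)) + Real.exp h * ∑ k ∈ Finset.Icc n (m - 2), DeltaF l r k := by
  rw [GammaF, if_neg (by omega), if_neg (by omega), if_pos h2]

lemma gammaF_gt_gt {l r : ℕ → ℝ} {n m : ℕ} {h : ℝ} (h1 : n < m) (h2 : ¬ l m ≤ h) :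
    GammaF l r n m h
      = l m - h + Real.exp h * ∑ k ∈ Finset.Icc n (m - 1), DeltaF l r k := by
  rw [GammaF, if_neg (by omega), if_neg (by omega), if_neg h2]

lemma min_perturb {h a b cc : ℝ} (hab : a ≤ b + cc) (hcc : 0 ≤ cc) :
    min h a ≤ min h b + cc := by
  rcases le_total h b with hh | hh
  · calc min h a ≤ h := min_le_left _ _
      _ ≤ min h b + cc := by rw [min_eq_left hh]; linarith
  · calc min h a ≤ a := min_le_right _ _
      _ ≤ min h b + cc := by rw [min_eq_right hh]; linarith

/-- if some admissible `m'` has a controlled Γ' value, the infimum is controlled -/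
lemma infGammaF_le {l' r' : ℕ → ℝ} {n : ℕ} {h x : ℝ} (m' : ℕ) (hm' : 1 ≤ m')
    (hx : GammaF l' r' n m' h ≤ x) (hx0 : 0 ≤ x) :
    infGammaF l' r' n h ≤ x := by
  unfold infGammaF
  by_cases hb : BddBelow {x : ℝ | ∃ m : ℕ, 1 ≤ m ∧ x = GammaF l' r' n m h}
  · exact le_trans (csInf_le hb ⟨m', hm', rfl⟩) hx
  · rw [Real.sInf_of_not_bddBelow hb]; exact hx0

lemma KSet_nonneg (l r : ℕ → ℝ) (hl : ∀ n : ℕ, 1 ≤ n → 0 < l n)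
    (hbdd : BddAbove (KSetF l r)) : 0 ≤ sSup (KSetF l r) := by
  have h0 : (0:ℝ) ∈ KSetF l r := by
    refine ⟨1, le_rfl, 0, le_rfl, (hl 1 le_rfl).le, ?_⟩
    unfold infGammaF
    have hset : ∀ x ∈ {x : ℝ | ∃ m : ℕ, 1 ≤ m ∧ x = GammaF l r 1 m 0}, (0:ℝ) ≤ x := by
      rintro x ⟨m, hm, rfl⟩
      rcases eq_or_lt_of_le hm with hm1 | hm1
      · rw [← hm1, gammaF_eq]
        simp only [le_min_iff]
        exact ⟨le_rfl, by linarith [hl 1 le_rfl]⟩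
      · rw [gammaF_gt_gt hm1 (by push_neg; linarith [hl m (by omega)])]
        have := sum_delta_nonneg l r (Finset.Icc 1 (m-1))
        have := hl m (by omega)
        nlinarith [Real.exp_pos (0:ℝ)]
    have hmem : (0:ℝ) ∈ {x : ℝ | ∃ m : ℕ, 1 ≤ m ∧ x = GammaF l r 1 m 0} := by
      refine ⟨1, le_rfl, ?_⟩
      rw [gammaF_eq]
      simp [min_eq_left (hl 1 le_rfl).le]
    exact le_antisymm (le_csInf ⟨0, hmem⟩ hset) (csInf_le ⟨0, hset⟩ hmem)
  exact le_csSup hbdd h0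

end Aux4
set_option maxHeartbeats 2000000

lemma core (l r l' r' : ℕ → ℝ) (c : ℝ) (hc : 0 < c)
    (hcl : ∀ k : ℕ, 1 ≤ k → |l' k - l k| ≤ c) (hcr : ∀ k : ℕ, 1 ≤ k → |r' k - r k| ≤ c)
    (n : ℕ) (hn : 1 ≤ n) (h K' : ℝ) (hh0 : 0 ≤ h) (hln : h ≤ l n) (hln' : h ≤ l' n)
    (hK' : 0 < K') (m : ℕ) (hm : 1 ≤ m) (hΓ : GammaF l r n m h ≤ K') :
    ∃ m', 1 ≤ m' ∧ GammaF l' r' n m' h ≤ Gbound c K' := by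
  classical
  have hGf := Gbound_facts c K' hc hK'
  simp only [max_le_iff] at hGf
  obtain ⟨⟨hGf1, hGf2⟩, hGf3⟩ := hGf
  set E3 := (1 + 3*c) * Real.exp (3*c/2) with hE3def
  have hE31 : 1 ≤ E3 := by
    rw [hE3def]
    nlinarith [Real.one_le_exp (show (0:ℝ) ≤ 3*c/2 by linarith)]
  have hexph : (1:ℝ) ≤ Real.exp h := Real.one_le_exp hh0
  have hexphpos : (0:ℝ) < Real.exp h := Real.exp_pos h
  rcases lt_trichotomy m n with hmn | hmn | hmn
  · -- m < n
    set T := (Finset.Ico m n).filter (fun j => l' j ≤ h) with hT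
    by_cases hTne : T.Nonempty
    · -- case B : use m' = max of T
      set m' := T.max' hTne with hm'def
      have hm'T : m' ∈ T := T.max'_mem hTne
      simp only [hT, Finset.mem_filter, Finset.mem_Ico] at hm'T
      obtain ⟨⟨hmm', hm'n⟩, hl'm'⟩ := hm'T
      have hm'1 : 1 ≤ m' := le_trans hm hmm'
      have hmax : ∀ j, m' < j → j < n → h < l' j := by
        intro j hj1 hj2
        by_contra hcon
        push_neg at hcon
        have : j ∈ T := by
          simp only [hT, Finset.mem_filter, Finset.mem_Ico]
          exact ⟨⟨by omega, hj2⟩, hcon⟩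
        have := T.le_max' j this
        omega
      have hkey1 : h ≤ l' (m' + 1) := by
        rcases eq_or_lt_of_le (show m' + 1 ≤ n by omega) with he | hlt
        · rw [he]; exact hln'
        · exact (hmax (m'+1) (by omega) hlt).le
      -- bound on the unprimed tail sum from hΓ
      have hlm'c : l m' ≤ h + c := by
        have := (abs_le_iff' (hcl m' hm'1)).2
        linarith
      -- get: tail sum bound and (for the non-trivial case) single delta bound
      have hfirst : ppart (r' m' + h - l' (m'+1)) ≤ 3*K' + 3*c := by
        by_cases hcase : m' = m ∧ l m ≤ h
        · obtain ⟨hce, hlm⟩ := hcase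
          rw [gammaF_lt_le hmn hlm] at hΓ
          have hP : ppart (r m + h - l (m+1)) ≤ K' := by
            have := mul_nonneg hexphpos.le (sum_delta_nonneg l r (Finset.Icc (m+1) (n-1)))
            linarith
          have hd1 := (abs_le_iff' (hcr m hm)).1
          have hd2 := (abs_le_iff' (hcl (m+1) (by omega))).2
          have : ppart (r' m + h - l' (m+1)) ≤ ppart (r m + h - l (m+1)) + 2*c :=
            ppart_le_add (by linarith) (by linarith)
          rw [hce]
          apply le_trans this
          linarith
        · -- Δ(m') is controlled
          have hΔ : Real.exp h * DeltaF l r m' ≤ K' := by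
            by_cases hlm : l m ≤ h
            · have hm'm : m < m' := by
                rcases eq_or_lt_of_le hmm' with he | hlt
                · exact absurd ⟨he.symm, hlm⟩ hcase
                · exact hlt
              rw [gammaF_lt_le hmn hlm] at hΓ
              have hsingle : DeltaF l r m' ≤ ∑ k ∈ Finset.Icc (m+1) (n-1), DeltaF l r k :=
                single_delta_le l r (by omega) (by omega)
              have := ppart_nonneg (r m + h - l (m+1))
              nlinarith
            · rw [gammaF_lt_gt hmn hlm] at hΓ
              push_neg at hlm
              have hsingle : DeltaF l r m' ≤ ∑ k ∈ Finset.Icc m (n-1), DeltaF l r k :=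
                single_delta_le l r hmm' (by omega)
              nlinarith
          -- apply ubound
          have hD3 : Real.exp h * Real.exp (-(1/2) * ppart (l m' + l (m'+1) - r m')) ≤ K' := by
            refine le_trans ?_ hΔ
            apply mul_le_mul_of_nonneg_left _ hexphpos.le
            unfold DeltaF
            nlinarith [Real.exp_pos (-l m'), Real.exp_pos (-l (m'+1)),
              ppart_nonneg (r m' - l m' - l (m'+1))]
          have hD4 : Real.exp h * ppart (r m' - l m' - l (m'+1)) ≤ K' := by
            refine le_trans ?_ hΔ
            apply mul_le_mul_of_nonneg_left _ hexphpos.le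
            unfold DeltaF
            nlinarith [Real.exp_pos (-l m'), Real.exp_pos (-l (m'+1)),
              Real.exp_pos (-(1/2) * ppart (l m' + l (m'+1) - r m'))]
          have hu : r m' + h - l (m'+1) ≤ 3*K' + c :=
            ubound hc.le hK' hh0 hlm'c hD3 hD4
          have hd1 := (abs_le_iff' (hcr m' hm'1)).1
          have hd2 := (abs_le_iff' (hcl (m'+1) (by omega))).2
          apply ppart_le_of_le (by linarith) (by nlinarith)
      -- tail bound
      have htail : Real.exp h * ∑ k ∈ Finset.Icc (m'+1) (n-1), DeltaF l' r' k ≤ E3 * K' := by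
        have hsum' : ∑ k ∈ Finset.Icc (m'+1) (n-1), DeltaF l' r' k
            ≤ E3 * ∑ k ∈ Finset.Icc (m'+1) (n-1), DeltaF l r k := by
          rw [hE3def]
          exact sum_delta_comp l r l' r' c hc.le hcl hcr (by omega)
        have hObound : Real.exp h * ∑ k ∈ Finset.Icc (m'+1) (n-1), DeltaF l r k ≤ K' := by
          by_cases hlm : l m ≤ h
          · rw [gammaF_lt_le hmn hlm] at hΓ
            have hmono := sum_delta_mono l r (show m+1 ≤ m'+1 by omega) (le_refl (n-1))
            have := ppart_nonneg (r m + h - l (m+1))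
            nlinarith
          · rw [gammaF_lt_gt hmn hlm] at hΓ
            push_neg at hlm
            have hmono := sum_delta_mono l r (show m ≤ m'+1 by omega) (le_refl (n-1))
            nlinarith
        have h0 := sum_delta_nonneg l' r' (Finset.Icc (m'+1) (n-1))
        have h0' := sum_delta_nonneg l r (Finset.Icc (m'+1) (n-1))
        calc Real.exp h * ∑ k ∈ Finset.Icc (m'+1) (n-1), DeltaF l' r' k
            ≤ Real.exp h * (E3 * ∑ k ∈ Finset.Icc (m'+1) (n-1), DeltaF l r k) :=
              mul_le_mul_of_nonneg_left hsum' hexphpos.le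
          _ = E3 * (Real.exp h * ∑ k ∈ Finset.Icc (m'+1) (n-1), DeltaF l r k) := by ring
          _ ≤ E3 * K' := mul_le_mul_of_nonneg_left hObound (by linarith)
      refine ⟨m', hm'1, ?_⟩
      rw [gammaF_lt_le hm'n hl'm']
      calc ppart (r' m' + h - l' (m'+1))
            + Real.exp h * ∑ k ∈ Finset.Icc (m'+1) (n-1), DeltaF l' r' k
          ≤ (3*K' + 3*c) + E3 * K' := by linarith
        _ ≤ Gbound c K' := hGf3
    · -- case A : T empty, use m' = m
      have hall : ∀ j, m ≤ j → j < n → h < l' j := by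
        intro j hj1 hj2
        by_contra hcon
        push_neg at hcon
        exact hTne ⟨j, by simp only [hT, Finset.mem_filter, Finset.mem_Ico]; exact ⟨⟨hj1, hj2⟩, hcon⟩⟩
      have hl'm : h < l' m := hall m le_rfl hmn
      have hl'm1 : h ≤ l' (m+1) := by
        rcases eq_or_lt_of_le (show m + 1 ≤ n by omega) with he | hlt
        · rw [he]; exact hln'
        · exact (hall (m+1) (by omega) hlt).le
      have hlmd := abs_le_iff' (hcl m hm)
      refine ⟨m, hm, ?_⟩
      rw [gammaF_lt_gt hmn (by push_neg; exact hl'm)]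
      by_cases hlm : l m ≤ h
      · -- the main case: exact Gbound
        rw [gammaF_lt_le hmn hlm] at hΓ
        have hsum0 := sum_delta_nonneg l r (Finset.Icc (m+1) (n-1))
        have hP : ppart (r m + h - l (m+1)) ≤ K' := by nlinarith
        have hS : Real.exp h * ∑ k ∈ Finset.Icc (m+1) (n-1), DeltaF l r k ≤ K' := by
          have := ppart_nonneg (r m + h - l (m+1))
          linarith
        -- split primed sum at bottom
        rw [sum_split_bot (DeltaF l' r') (show m ≤ n-1 by omega)]
        have hlm'h : l' m - h ≤ c := by linarith
        -- bound exp h * DeltaF l' r' m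
        have hdelta : Real.exp h * DeltaF l' r' m
            ≤ 2 + (1 + 2*c + K') * Real.exp c * Real.exp (K'/2) := by
          unfold DeltaF
          have ht1 : Real.exp h * Real.exp (-l' m) ≤ 1 := by
            rw [← Real.exp_add]
            exact Real.exp_le_one_iff.mpr (by linarith)
          have ht2 : Real.exp h * Real.exp (-l' (m+1)) ≤ 1 := by
            rw [← Real.exp_add]
            exact Real.exp_le_one_iff.mpr (by linarith)
          have hBR : h - K' - 2*c ≤ l' (m+1) - r' m := by
            have hd1 := (abs_le_iff' (hcr m hm)).1
            have hd2 := (abs_le_iff' (hcl (m+1) (by omega))).2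
            have : r m + h - l (m+1) ≤ K' := le_trans (le_ppart _) hP
            linarith
          have ht34 := t34bound hc.le hK'.le hh0 hl'm hBR
          calc Real.exp h * (Real.exp (-l' m) + Real.exp (-l' (m+1))
                + Real.exp (-(1/2) * ppart (l' m + l' (m+1) - r' m))
                + ppart (r' m - l' m - l' (m+1)))
              = Real.exp h * Real.exp (-l' m) + Real.exp h * Real.exp (-l' (m+1))
                + (Real.exp h * Real.exp (-(1/2) * ppart (l' m + l' (m+1) - r' m))
                + Real.exp h * ppart (r' m - l' m - l' (m+1))) := by ring
            _ ≤ 1 + 1 + (1 + 2*c + K') * Real.exp c * Real.exp (K'/2) := by linarith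
            _ = 2 + (1 + 2*c + K') * Real.exp c * Real.exp (K'/2) := by ring
        -- tail
        have htail : Real.exp h * ∑ k ∈ Finset.Icc (m+1) (n-1), DeltaF l' r' k ≤ E3 * K' := by
          have hsum' : ∑ k ∈ Finset.Icc (m+1) (n-1), DeltaF l' r' k
              ≤ E3 * ∑ k ∈ Finset.Icc (m+1) (n-1), DeltaF l r k := by
            rw [hE3def]
            exact sum_delta_comp l r l' r' c hc.le hcl hcr (by omega)
          have h0' := sum_delta_nonneg l r (Finset.Icc (m+1) (n-1))
          calc Real.exp h * ∑ k ∈ Finset.Icc (m+1) (n-1), DeltaF l' r' k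
              ≤ Real.exp h * (E3 * ∑ k ∈ Finset.Icc (m+1) (n-1), DeltaF l r k) :=
                mul_le_mul_of_nonneg_left hsum' hexphpos.le
            _ = E3 * (Real.exp h * ∑ k ∈ Finset.Icc (m+1) (n-1), DeltaF l r k) := by ring
            _ ≤ E3 * K' := mul_le_mul_of_nonneg_left hS (by linarith)
        have hexpand : Real.exp h * (DeltaF l' r' m + ∑ k ∈ Finset.Icc (m+1) (n-1), DeltaF l' r' k)
            = Real.exp h * DeltaF l' r' m
              + Real.exp h * ∑ k ∈ Finset.Icc (m+1) (n-1), DeltaF l' r' k := by ring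
        rw [hexpand]
        unfold Gbound
        rw [← hE3def]
        linarith
      · -- easy case: l m > h
        rw [gammaF_lt_gt hmn hlm] at hΓ
        push_neg at hlm
        have hS : Real.exp h * ∑ k ∈ Finset.Icc m (n-1), DeltaF l r k ≤ K' := by linarith
        have hsum' : ∑ k ∈ Finset.Icc m (n-1), DeltaF l' r' k
            ≤ E3 * ∑ k ∈ Finset.Icc m (n-1), DeltaF l r k := by
          rw [hE3def]
          exact sum_delta_comp l r l' r' c hc.le hcl hcr hm
        have h0' := sum_delta_nonneg l r (Finset.Icc m (n-1))
        have htail : Real.exp h * ∑ k ∈ Finset.Icc m (n-1), DeltaF l' r' k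
            ≤ E3 * (Real.exp h * ∑ k ∈ Finset.Icc m (n-1), DeltaF l r k) := by
          calc Real.exp h * ∑ k ∈ Finset.Icc m (n-1), DeltaF l' r' k
              ≤ Real.exp h * (E3 * ∑ k ∈ Finset.Icc m (n-1), DeltaF l r k) :=
                mul_le_mul_of_nonneg_left hsum' hexphpos.le
            _ = E3 * (Real.exp h * ∑ k ∈ Finset.Icc m (n-1), DeltaF l r k) := by ring
        have hfin : l' m - h + Real.exp h * ∑ k ∈ Finset.Icc m (n-1), DeltaF l' r' k
            ≤ c + E3 * K' := by
          have hmul : E3 * (Real.exp h * ∑ k ∈ Finset.Icc m (n-1), DeltaF l r k)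
              ≤ E3 * (K' - (l m - h)) := by
            apply mul_le_mul_of_nonneg_left _ (by linarith)
            linarith
          have : l m - h ≤ E3 * (l m - h) := le_mul_of_one_le_left (by linarith) hE31
          nlinarith
        exact hfin.trans hGf2
  · -- m = n
    subst hmn
    rw [gammaF_eq] at hΓ
    refine ⟨m, hm, ?_⟩
    rw [gammaF_eq]
    have hd := (abs_le_iff' (hcl m hm)).1
    have : min h (l' m - h) ≤ min h (l m - h) + c := min_perturb (by linarith) hc.le
    linarith
  · -- m > n
    set T := (Finset.Ioc n m).filter (fun j => l' j ≤ h) with hT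
    by_cases hTne : T.Nonempty
    · -- case B' : use m' = min of T
      set m' := T.min' hTne with hm'def
      have hm'T : m' ∈ T := T.min'_mem hTne
      simp only [hT, Finset.mem_filter, Finset.mem_Ioc] at hm'T
      obtain ⟨⟨hnm', hm'm⟩, hl'm'⟩ := hm'T
      have hm'1 : 1 ≤ m' := by omega
      have hmin : ∀ j, n < j → j < m' → h < l' j := by
        intro j hj1 hj2
        by_contra hcon
        push_neg at hcon
        have : j ∈ T := by
          simp only [hT, Finset.mem_filter, Finset.mem_Ioc]
          exact ⟨⟨hj1, by omega⟩, hcon⟩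
        have := T.min'_le j this
        omega
      have hkey1 : h ≤ l' (m' - 1) := by
        rcases eq_or_lt_of_le (show n ≤ m' - 1 by omega) with he | hlt
        · rw [← he]; exact hln'
        · exact (hmin (m'-1) hlt (by omega)).le
      have hlm'c : l m' ≤ h + c := by
        have := (abs_le_iff' (hcl m' hm'1)).2
        linarith
      have hidx : m' - 1 + 1 = m' := by omega
      have hfirst : ppart (r' (m'-1) + h - l' (m'-1)) ≤ 3*K' + 3*c := by
        by_cases hcase : m' = m ∧ l m ≤ h
        · obtain ⟨hce, hlm⟩ := hcase
          rw [gammaF_gt_le hmn hlm] at hΓ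
          have hP : ppart (r (m-1) + h - l (m-1)) ≤ K' := by
            have := mul_nonneg hexphpos.le (sum_delta_nonneg l r (Finset.Icc n (m-2)))
            linarith
          have hd1 := (abs_le_iff' (hcr (m-1) (by omega))).1
          have hd2 := (abs_le_iff' (hcl (m-1) (by omega))).2
          have : ppart (r' (m-1) + h - l' (m-1)) ≤ ppart (r (m-1) + h - l (m-1)) + 2*c :=
            ppart_le_add (by linarith) (by linarith)
          rw [hce]
          apply le_trans this
          linarith
        · have hΔ : Real.exp h * DeltaF l r (m'-1) ≤ K' := by
            by_cases hlm : l m ≤ h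
            · have hm'm2 : m' < m := by
                rcases eq_or_lt_of_le hm'm with he | hlt
                · exact absurd ⟨he, hlm⟩ hcase
                · exact hlt
              rw [gammaF_gt_le hmn hlm] at hΓ
              have hsingle : DeltaF l r (m'-1) ≤ ∑ k ∈ Finset.Icc n (m-2), DeltaF l r k :=
                single_delta_le l r (by omega) (by omega)
              have := ppart_nonneg (r (m-1) + h - l (m-1))
              nlinarith
            · rw [gammaF_gt_gt hmn hlm] at hΓ
              push_neg at hlm
              have hsingle : DeltaF l r (m'-1) ≤ ∑ k ∈ Finset.Icc n (m-1), DeltaF l r k :=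
                single_delta_le l r (by omega) (by omega)
              nlinarith
          have hDexp : DeltaF l r (m'-1)
              = Real.exp (-l (m'-1)) + Real.exp (-l m')
                + Real.exp (-(1/2) * ppart (l (m'-1) + l m' - r (m'-1)))
                + ppart (r (m'-1) - l (m'-1) - l m') := by
            unfold DeltaF
            rw [hidx]
          rw [hDexp] at hΔ
          have harg1 : l (m'-1) + l m' - r (m'-1) = l m' + l (m'-1) - r (m'-1) := by ring
          have harg2 : r (m'-1) - l (m'-1) - l m' = r (m'-1) - l m' - l (m'-1) := by ring
          have hD3 : Real.exp h * Real.exp (-(1/2) * ppart (l m' + l (m'-1) - r (m'-1))) ≤ K' := by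
            rw [← harg1]
            refine le_trans ?_ hΔ
            apply mul_le_mul_of_nonneg_left _ hexphpos.le
            nlinarith [Real.exp_pos (-l (m'-1)), Real.exp_pos (-l m'),
              ppart_nonneg (r (m'-1) - l (m'-1) - l m')]
          have hD4 : Real.exp h * ppart (r (m'-1) - l m' - l (m'-1)) ≤ K' := by
            rw [← harg2]
            refine le_trans ?_ hΔ
            apply mul_le_mul_of_nonneg_left _ hexphpos.le
            nlinarith [Real.exp_pos (-l (m'-1)), Real.exp_pos (-l m'),
              Real.exp_pos (-(1/2) * ppart (l (m'-1) + l m' - r (m'-1)))]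
          have hu : r (m'-1) + h - l (m'-1) ≤ 3*K' + c :=
            ubound hc.le hK' hh0 hlm'c hD3 hD4
          have hd1 := (abs_le_iff' (hcr (m'-1) (by omega))).1
          have hd2 := (abs_le_iff' (hcl (m'-1) (by omega))).2
          apply ppart_le_of_le (by linarith) (by nlinarith)
      have htail : Real.exp h * ∑ k ∈ Finset.Icc n (m'-2), DeltaF l' r' k ≤ E3 * K' := by
        have hsum' : ∑ k ∈ Finset.Icc n (m'-2), DeltaF l' r' k
            ≤ E3 * ∑ k ∈ Finset.Icc n (m'-2), DeltaF l r k := by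
          rw [hE3def]
          exact sum_delta_comp l r l' r' c hc.le hcl hcr hn
        have hObound : Real.exp h * ∑ k ∈ Finset.Icc n (m'-2), DeltaF l r k ≤ K' := by
          by_cases hlm : l m ≤ h
          · rw [gammaF_gt_le hmn hlm] at hΓ
            have hmono := sum_delta_mono l r (le_refl n) (show m'-2 ≤ m-2 by omega)
            have := ppart_nonneg (r (m-1) + h - l (m-1))
            nlinarith
          · rw [gammaF_gt_gt hmn hlm] at hΓ
            push_neg at hlm
            have hmono := sum_delta_mono l r (le_refl n) (show m'-2 ≤ m-1 by omega)
            nlinarith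
        have h0' := sum_delta_nonneg l r (Finset.Icc n (m'-2))
        calc Real.exp h * ∑ k ∈ Finset.Icc n (m'-2), DeltaF l' r' k
            ≤ Real.exp h * (E3 * ∑ k ∈ Finset.Icc n (m'-2), DeltaF l r k) :=
              mul_le_mul_of_nonneg_left hsum' hexphpos.le
          _ = E3 * (Real.exp h * ∑ k ∈ Finset.Icc n (m'-2), DeltaF l r k) := by ring
          _ ≤ E3 * K' := mul_le_mul_of_nonneg_left hObound (by linarith)
      refine ⟨m', hm'1, ?_⟩
      rw [gammaF_gt_le hnm' hl'm']
      calc ppart (r' (m'-1) + h - l' (m'-1))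
            + Real.exp h * ∑ k ∈ Finset.Icc n (m'-2), DeltaF l' r' k
          ≤ (3*K' + 3*c) + E3 * K' := by linarith
        _ ≤ Gbound c K' := hGf3
    · -- case A' : T empty, use m' = m
      have hall : ∀ j, n < j → j ≤ m → h < l' j := by
        intro j hj1 hj2
        by_contra hcon
        push_neg at hcon
        exact hTne ⟨j, by simp only [hT, Finset.mem_filter, Finset.mem_Ioc]; exact ⟨⟨hj1, hj2⟩, hcon⟩⟩
      have hl'm : h < l' m := hall m hmn le_rfl
      have hl'm1 : h ≤ l' (m-1) := by
        rcases eq_or_lt_of_le (show n ≤ m - 1 by omega) with he | hlt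
        · rw [← he]; exact hln'
        · exact (hall (m-1) hlt (by omega)).le
      have hlmd := abs_le_iff' (hcl m hm)
      refine ⟨m, hm, ?_⟩
      rw [gammaF_gt_gt hmn (by push_neg; exact hl'm)]
      by_cases hlm : l m ≤ h
      · rw [gammaF_gt_le hmn hlm] at hΓ
        have hsum0 := sum_delta_nonneg l r (Finset.Icc n (m-2))
        have hP : ppart (r (m-1) + h - l (m-1)) ≤ K' := by nlinarith
        have hS : Real.exp h * ∑ k ∈ Finset.Icc n (m-2), DeltaF l r k ≤ K' := by
          have := ppart_nonneg (r (m-1) + h - l (m-1))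
          linarith
        rw [sum_split_top (DeltaF l' r') (show n ≤ m-1 by omega) (by omega)]
        rw [show m - 1 - 1 = m - 2 from by omega]
        have hlm'h : l' m - h ≤ c := by linarith [hlmd.1]
        have hidx : m - 1 + 1 = m := by omega
        have hdelta : Real.exp h * DeltaF l' r' (m-1)
            ≤ 2 + (1 + 2*c + K') * Real.exp c * Real.exp (K'/2) := by
          have hDexp : DeltaF l' r' (m-1)
              = Real.exp (-l' (m-1)) + Real.exp (-l' m)
                + Real.exp (-(1/2) * ppart (l' m + l' (m-1) - r' (m-1)))
                + ppart (r' (m-1) - l' m - l' (m-1)) := by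
            unfold DeltaF
            rw [hidx, show l' (m-1) + l' m - r' (m-1) = l' m + l' (m-1) - r' (m-1) from by ring,
              show r' (m-1) - l' (m-1) - l' m = r' (m-1) - l' m - l' (m-1) from by ring]
          rw [hDexp]
          have ht1 : Real.exp h * Real.exp (-l' (m-1)) ≤ 1 := by
            rw [← Real.exp_add]
            exact Real.exp_le_one_iff.mpr (by linarith)
          have ht2 : Real.exp h * Real.exp (-l' m) ≤ 1 := by
            rw [← Real.exp_add]
            exact Real.exp_le_one_iff.mpr (by linarith)
          have hBR : h - K' - 2*c ≤ l' (m-1) - r' (m-1) := by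
            have hd1 := (abs_le_iff' (hcr (m-1) (by omega))).1
            have hd2 := (abs_le_iff' (hcl (m-1) (by omega))).2
            have : r (m-1) + h - l (m-1) ≤ K' := le_trans (le_ppart _) hP
            linarith
          have ht34 := t34bound hc.le hK'.le hh0 hl'm hBR
          calc Real.exp h * (Real.exp (-l' (m-1)) + Real.exp (-l' m)
                + Real.exp (-(1/2) * ppart (l' m + l' (m-1) - r' (m-1)))
                + ppart (r' (m-1) - l' m - l' (m-1)))
              = Real.exp h * Real.exp (-l' (m-1)) + Real.exp h * Real.exp (-l' m)
                + (Real.exp h * Real.exp (-(1/2) * ppart (l' m + l' (m-1) - r' (m-1)))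
                + Real.exp h * ppart (r' (m-1) - l' m - l' (m-1))) := by ring
            _ ≤ 1 + 1 + (1 + 2*c + K') * Real.exp c * Real.exp (K'/2) := by linarith
            _ = 2 + (1 + 2*c + K') * Real.exp c * Real.exp (K'/2) := by ring
        have htail : Real.exp h * ∑ k ∈ Finset.Icc n (m-2), DeltaF l' r' k ≤ E3 * K' := by
          have hsum' : ∑ k ∈ Finset.Icc n (m-2), DeltaF l' r' k
              ≤ E3 * ∑ k ∈ Finset.Icc n (m-2), DeltaF l r k := by
            rw [hE3def]
            exact sum_delta_comp l r l' r' c hc.le hcl hcr hn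
          calc Real.exp h * ∑ k ∈ Finset.Icc n (m-2), DeltaF l' r' k
              ≤ Real.exp h * (E3 * ∑ k ∈ Finset.Icc n (m-2), DeltaF l r k) :=
                mul_le_mul_of_nonneg_left hsum' hexphpos.le
            _ = E3 * (Real.exp h * ∑ k ∈ Finset.Icc n (m-2), DeltaF l r k) := by ring
            _ ≤ E3 * K' := mul_le_mul_of_nonneg_left hS (by linarith)
        have hexpand : Real.exp h * (DeltaF l' r' (m-1) + ∑ k ∈ Finset.Icc n (m-2), DeltaF l' r' k)
            = Real.exp h * DeltaF l' r' (m-1)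
              + Real.exp h * ∑ k ∈ Finset.Icc n (m-2), DeltaF l' r' k := by ring
        rw [hexpand]
        unfold Gbound
        rw [← hE3def]
        linarith
      · rw [gammaF_gt_gt hmn hlm] at hΓ
        push_neg at hlm
        have hS : Real.exp h * ∑ k ∈ Finset.Icc n (m-1), DeltaF l r k ≤ K' := by linarith
        have hsum' : ∑ k ∈ Finset.Icc n (m-1), DeltaF l' r' k
            ≤ E3 * ∑ k ∈ Finset.Icc n (m-1), DeltaF l r k := by
          rw [hE3def]
          exact sum_delta_comp l r l' r' c hc.le hcl hcr hn
        have h0' := sum_delta_nonneg l r (Finset.Icc n (m-1))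
        have htail : Real.exp h * ∑ k ∈ Finset.Icc n (m-1), DeltaF l' r' k
            ≤ E3 * (Real.exp h * ∑ k ∈ Finset.Icc n (m-1), DeltaF l r k) := by
          calc Real.exp h * ∑ k ∈ Finset.Icc n (m-1), DeltaF l' r' k
              ≤ Real.exp h * (E3 * ∑ k ∈ Finset.Icc n (m-1), DeltaF l r k) :=
                mul_le_mul_of_nonneg_left hsum' hexphpos.le
            _ = E3 * (Real.exp h * ∑ k ∈ Finset.Icc n (m-1), DeltaF l r k) := by ring
        have hfin : l' m - h + Real.exp h * ∑ k ∈ Finset.Icc n (m-1), DeltaF l' r' k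
            ≤ c + E3 * K' := by
          have hmul : E3 * (Real.exp h * ∑ k ∈ Finset.Icc n (m-1), DeltaF l r k)
              ≤ E3 * (K' - (l m - h)) := by
            apply mul_le_mul_of_nonneg_left _ (by linarith)
            linarith
          have : l m - h ≤ E3 * (l m - h) := le_mul_of_one_le_left (by linarith) hE31
          nlinarith [hlmd.1]
        exact hfin.trans hGf2

/-- Let `{l_n}, {l'_n}` be sequences of positive reals and `{r_n}, {r'_n}` sequences of
nonnegative reals, with `|l'_n - l_n| ≤ c` and `|r'_n - r_n| ≤ c` for every `n ≥ 1`
(where `c > 0`). If `K = sup_{n ≥ 1} sup_{h ∈ [0, l_n]} inf_{m ≥ 1} Γ_{nm}(h)` is finite,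
then `K' ≤ c + 2 + (1 + 2c + K) e^c e^{K/2} + (1 + 3c) e^{3c/2} K`, where `K'` is built by the
same formulas from `({l'_n}, {r'_n})` (the bound on `K'` is expressed by bounding each
`inf_{m ≥ 1} Γ'_{nm}(h)` for `n ≥ 1`, `h ∈ [0, l'_n]`). -/
theorem stmt14 (l r l' r' : ℕ → ℝ)
    (hl : ∀ n : ℕ, 1 ≤ n → 0 < l n) (hr : ∀ n : ℕ, 1 ≤ n → 0 ≤ r n)
    (hl' : ∀ n : ℕ, 1 ≤ n → 0 < l' n) (hr' : ∀ n : ℕ, 1 ≤ n → 0 ≤ r' n)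
    (c : ℝ) (hc : 0 < c)
    (hcl : ∀ n : ℕ, 1 ≤ n → |l' n - l n| ≤ c) (hcr : ∀ n : ℕ, 1 ≤ n → |r' n - r n| ≤ c)
    (hbdd : BddAbove (KSetF l r)) :
    ∀ n : ℕ, 1 ≤ n → ∀ h : ℝ, 0 ≤ h → h ≤ l' n →
      infGammaF l' r' n h ≤
        c + 2 + (1 + 2 * c + sSup (KSetF l r)) * Real.exp c * Real.exp (sSup (KSetF l r) / 2) +
          (1 + 3 * c) * Real.exp (3 * c / 2) * sSup (KSetF l r) := by
  intro n hn h hh0 hhl'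
  set K := sSup (KSetF l r) with hKdef
  have hK0 : 0 ≤ K := KSet_nonneg l r hl hbdd
  show infGammaF l' r' n h ≤ Gbound c K
  have hmain : ∀ ε : ℝ, 0 < ε → infGammaF l' r' n h ≤ Gbound c (K + ε) := by
    intro ε hε
    have hK'pos : 0 < K + ε := by linarith
    have hGnn : 0 ≤ Gbound c (K + ε) := Gbound_nonneg c (K + ε) hc hK'pos.le
    by_cases hcase : h ≤ l n
    · have hmem : infGammaF l r n h ∈ KSetF l r := ⟨n, hn, h, hh0, hcase, rfl⟩
      have hinfle : infGammaF l r n h ≤ K := le_csSup hbdd hmem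
      obtain ⟨m, hm, hΓ⟩ : ∃ m : ℕ, 1 ≤ m ∧ GammaF l r n m h ≤ K + ε := by
        by_cases hb : BddBelow {x : ℝ | ∃ m : ℕ, 1 ≤ m ∧ x = GammaF l r n m h}
        · have hne : Set.Nonempty {x : ℝ | ∃ m : ℕ, 1 ≤ m ∧ x = GammaF l r n m h} :=
            ⟨GammaF l r n n h, n, hn, rfl⟩
          have hlt : sInf {x : ℝ | ∃ m : ℕ, 1 ≤ m ∧ x = GammaF l r n m h} < K + ε := by
            have heq : infGammaF l r n h
                = sInf {x : ℝ | ∃ m : ℕ, 1 ≤ m ∧ x = GammaF l r n m h} := rfl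
            linarith [heq ▸ hinfle]
          obtain ⟨a, ⟨m, hm, rfl⟩, halt⟩ := exists_lt_of_csInf_lt hne hlt
          exact ⟨m, hm, halt.le⟩
        · rw [not_bddBelow_iff] at hb
          obtain ⟨a, has, halt⟩ := hb (K + ε)
          obtain ⟨m, hm, rfl⟩ := has
          exact ⟨m, hm, halt.le⟩
      obtain ⟨m', hm'1, hΓ'⟩ :=
        core l r l' r' c hc hcl hcr n hn h (K + ε) hh0 hcase hhl' hK'pos m hm hΓ
      exact infGammaF_le m' hm'1 hΓ' hGnn
    · push_neg at hcase
      have hled : GammaF l' r' n n h ≤ c := by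
        rw [gammaF_eq]
        have hd := (abs_le_iff' (hcl n hn)).1
        calc min h (l' n - h) ≤ l' n - h := min_le_right _ _
          _ ≤ c := by linarith
      have hGf := Gbound_facts c (K + ε) hc hK'pos
      simp only [max_le_iff] at hGf
      have hcG : c ≤ Gbound c (K + ε) := by linarith [hGf.1.1]
      exact infGammaF_le n hn (hled.trans hcG) hGnn
  have hcont : Continuous fun t : ℝ => Gbound c t := by
    unfold Gbound
    continuity
  have h1 : Filter.Tendsto (fun ε : ℝ => K + ε) (nhdsWithin 0 (Set.Ioi 0)) (nhds K) := by
    have h2 : Continuous fun ε : ℝ => K + ε := continuous_const.add continuous_id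
    have h3 := (h2.tendsto (0 : ℝ)).mono_left (nhdsWithin_le_nhds (s := Set.Ioi (0:ℝ)))
    simpa using h3
  have htend : Filter.Tendsto (fun ε : ℝ => Gbound c (K + ε)) (nhdsWithin 0 (Set.Ioi 0))
      (nhds (Gbound c K)) := (hcont.tendsto K).comp h1
  refine ge_of_tendsto htend ?_
  filter_upwards [self_mem_nhdsWithin] with ε hε
  exact hmain ε hε
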